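/- Let $n \ge 3$, let $W$ be a positive definite Hermitian $n\times n$ matrix over $\mathbb{C}$, let $v \in \mathbb{C}^n$, let $c > 0$, and set $W_0 = W + c\,vv^*$. Let $A$ be an $n\times n$ Hermitian matrix whose eigenvalues relative to $W$ satisfy $\gamma_3(A;W) \le -2n+3$ and $\gamma_n(A;W) \le 1$. Let $\varepsilon \ge 0$ and let $c' \ge 0$ satisfy $c'\,vv^* \le c\,W_0$ (as Hermitian forms). Denote by $\Gamma_1 \le \dots \le \Gamma_n$ the eigenvalues of $\varepsilon c\,A + \varepsilon c'\,vv^*$ relative to $W_0$. Then $\Gamma_2 + \Gamma_3 + \dots + \Gamma_n \le -\varepsilon c$. -/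

import Mathlib

open Matrix
open scoped ComplexOrder

/-- The Rayleigh quotient `u*Au / u*Wu` of a pair of matrices at a vector `u`. -/
noncomputable def rayleigh {n : ℕ} (A W : Matrix (Fin n) (Fin n) ℂ) (u : Fin n → ℂ) : ℝ :=
  ((star u) ⬝ᵥ (A *ᵥ u)).re / ((star u) ⬝ᵥ (W *ᵥ u)).re

/-- The `j`-th eigenvalue (in increasing order, `1 ≤ j ≤ n`) of the Hermitian matrix `A`
relative to the positive definite Hermitian matrix `W`, via the Courant–Fischer formula
`γ_j(A;W) = min_{dim F = j} max_{u ∈ F \ {0}} (u*Au)/(u*Wu)`. -/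
noncomputable def relEig {n : ℕ} (A W : Matrix (Fin n) (Fin n) ℂ) (j : ℕ) : ℝ :=
  sInf { r : ℝ | ∃ F : Submodule ℂ (Fin n → ℂ), Module.finrank ℂ F = j ∧
      r = sSup { s : ℝ | ∃ u : Fin n → ℂ, u ∈ F ∧ u ≠ 0 ∧ s = rayleigh A W u } }

/-! On the hyperplane `v^⊥` the rank-one terms vanish, so there the Rayleigh quotient of
`B = εc·A + εc'·vv*` relative to `W₀` is `εc` times that of `A` relative to `W`. Min-max
over subspaces cut down by this hyperplane gives `Γ₂ ≤ εc·γ₃ ≤ εc(3 - 2n)` and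
`Γ_j ≤ εc·γ_n ≤ εc` for `3 ≤ j < n`. On the whole space, `A ≤ W ≤ W₀` (from `γ_n ≤ 1`) and
`c'·vv* ≤ c·W₀` give `Γ_n ≤ 2εc`. Summing, `Γ₂ + ⋯ + Γ_n ≤ εc(2 - n) ≤ -εc`. -/

variable {n : ℕ}

noncomputable def reQuad (M : Matrix (Fin n) (Fin n) ℂ) (u : Fin n → ℂ) : ℝ :=
  (star u ⬝ᵥ (M *ᵥ u)).re

theorem rayleigh_def (A W : Matrix (Fin n) (Fin n) ℂ) (u : Fin n → ℂ) :
    rayleigh A W u = reQuad A u / reQuad W u := rfl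

section reQuad

variable (M N : Matrix (Fin n) (Fin n) ℂ) (u : Fin n → ℂ)

theorem reQuad_add : reQuad (M + N) u = reQuad M u + reQuad N u := by
  simp [reQuad, add_mulVec, dotProduct_add]

theorem reQuad_sub : reQuad (M - N) u = reQuad M u - reQuad N u := by
  simp [reQuad, sub_mulVec, dotProduct_sub]

theorem reQuad_smul (a : ℝ) : reQuad (a • M) u = a * reQuad M u := by
  simp [reQuad, smul_mulVec, dotProduct_smul]

theorem reQuad_vecMulVec_star (v : Fin n → ℂ) :
    reQuad (vecMulVec v (star v)) u = Complex.normSq (star v ⬝ᵥ u) := by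
  rw [reQuad, vecMulVec_mulVec, op_smul_eq_smul, dotProduct_smul, smul_eq_mul,
    star_dotProduct u v, Complex.star_def, Complex.mul_conj, Complex.ofReal_re]

theorem reQuad_ofReal_smul (r : ℝ) : reQuad M ((r : ℂ) • u) = r ^ 2 * reQuad M u := by
  simp only [reQuad, mulVec_smul, star_smul, smul_dotProduct, dotProduct_smul, smul_eq_mul,
    Complex.star_def, Complex.conj_ofReal, ← mul_assoc, ← Complex.ofReal_mul,
    Complex.re_ofReal_mul, sq]

theorem continuous_reQuad : Continuous (reQuad M) := by
  unfold reQuad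
  fun_prop

end reQuad

theorem Matrix.PosDef.reQuad_pos {W : Matrix (Fin n) (Fin n) ℂ} (hW : W.PosDef)
    {u : Fin n → ℂ} (hu : u ≠ 0) : 0 < reQuad W u :=
  hW.re_dotProduct_pos hu

theorem Matrix.PosSemidef.reQuad_nonneg {W : Matrix (Fin n) (Fin n) ℂ} (hW : W.PosSemidef)
    (u : Fin n → ℂ) : 0 ≤ reQuad W u :=
  hW.re_dotProduct_nonneg u

theorem rayleigh_ofReal_smul (A W : Matrix (Fin n) (Fin n) ℂ) {r : ℝ} (hr : r ≠ 0)
    (u : Fin n → ℂ) : rayleigh A W ((r : ℂ) • u) = rayleigh A W u := by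
  rw [rayleigh_def, rayleigh_def, reQuad_ofReal_smul, reQuad_ofReal_smul,
    mul_div_mul_left _ _ (pow_ne_zero 2 hr)]

def rayleighSet (A W : Matrix (Fin n) (Fin n) ℂ) (F : Submodule ℂ (Fin n → ℂ)) : Set ℝ :=
  { s : ℝ | ∃ u : Fin n → ℂ, u ∈ F ∧ u ≠ 0 ∧ s = rayleigh A W u }

theorem relEig_eq_sInf (A W : Matrix (Fin n) (Fin n) ℂ) (j : ℕ) :
    relEig A W j =
      sInf { r : ℝ | ∃ F : Submodule ℂ (Fin n → ℂ), Module.finrank ℂ F = j ∧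
        r = sSup (rayleighSet A W F) } := rfl

theorem rayleighSet_subset_image_sphere (A W : Matrix (Fin n) (Fin n) ℂ)
    (F : Submodule ℂ (Fin n → ℂ)) : rayleighSet A W F ⊆ rayleigh A W '' Metric.sphere 0 1 := by
  rintro _ ⟨u, -, hu, rfl⟩
  have hnorm : ‖u‖ ≠ 0 := norm_ne_zero_iff.mpr hu
  refine ⟨((‖u‖⁻¹ : ℝ) : ℂ) • u, ?_, rayleigh_ofReal_smul A W (inv_ne_zero hnorm) u⟩
  simp [norm_smul, hnorm]

theorem Submodule.exists_le_finrank_eq {K : Type*} {V : Type*} [DivisionRing K] [AddCommGroup V]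
    [Module K V] (G : Submodule K V) {j : ℕ} (hj : j ≤ Module.finrank K G) :
    ∃ F : Submodule K V, F ≤ G ∧ Module.finrank K F = j := by
  obtain ⟨f, hf⟩ := exists_linearIndependent_of_le_finrank hj
  refine ⟨Submodule.span K (Set.range (G.subtype ∘ f)), ?_, ?_⟩
  · rw [Submodule.span_le]
    rintro _ ⟨i, rfl⟩
    exact (f i).2
  · rw [finrank_span_eq_card (hf.map' G.subtype G.ker_subtype), Fintype.card_fin]

section PosDef

variable {A W : Matrix (Fin n) (Fin n) ℂ}

theorem isCompact_rayleigh_image_sphere (hW : W.PosDef) :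
    IsCompact (rayleigh A W '' Metric.sphere 0 1) := by
  refine (isCompact_sphere 0 1).image_of_continuousOn
    ((continuous_reQuad A).continuousOn.div (continuous_reQuad W).continuousOn fun u hu => ?_)
  exact (hW.reQuad_pos (ne_zero_of_mem_sphere one_ne_zero ⟨u, hu⟩)).ne'

theorem rayleigh_le_sSup_rayleighSet (hW : W.PosDef) {F : Submodule ℂ (Fin n → ℂ)}
    {u : Fin n → ℂ} (huF : u ∈ F) (hu : u ≠ 0) :
    rayleigh A W u ≤ sSup (rayleighSet A W F) :=
  le_csSup ((isCompact_rayleigh_image_sphere hW).bddAbove.mono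
    (rayleighSet_subset_image_sphere A W F)) ⟨u, huF, hu, rfl⟩

theorem sSup_rayleighSet_le {F : Submodule ℂ (Fin n → ℂ)} (hF : F ≠ ⊥) {r : ℝ}
    (h : ∀ u ∈ F, u ≠ 0 → rayleigh A W u ≤ r) : sSup (rayleighSet A W F) ≤ r := by
  obtain ⟨u, huF, hu⟩ := Submodule.exists_mem_ne_zero_of_ne_bot hF
  refine csSup_le ⟨_, u, huF, hu, rfl⟩ ?_
  rintro _ ⟨w, hwF, hw, rfl⟩
  exact h w hwF hw

theorem relEig_le_sSup_rayleighSet (hW : W.PosDef) {F : Submodule ℂ (Fin n → ℂ)} {j : ℕ}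
    (hj : 0 < j) (hF : Module.finrank ℂ F = j) : relEig A W j ≤ sSup (rayleighSet A W F) := by
  obtain ⟨m, hm⟩ := (isCompact_rayleigh_image_sphere (A := A) hW).bddBelow
  refine csInf_le ⟨m, ?_⟩ ⟨F, hF, rfl⟩
  rintro _ ⟨G, hG, rfl⟩
  obtain ⟨u, huG, hu⟩ := Submodule.exists_mem_ne_zero_of_ne_bot
    (Submodule.one_le_finrank_iff.mp (hG ▸ hj))
  exact (hm (rayleighSet_subset_image_sphere A W G ⟨u, huG, hu, rfl⟩)).trans
    (rayleigh_le_sSup_rayleighSet hW huG hu)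

theorem relEig_le_of_forall_rayleigh_le (hW : W.PosDef) {K : Submodule ℂ (Fin n → ℂ)} {j : ℕ}
    (hj : 0 < j) (hjK : j ≤ Module.finrank ℂ K) {r : ℝ}
    (h : ∀ u ∈ K, u ≠ 0 → rayleigh A W u ≤ r) : relEig A W j ≤ r := by
  obtain ⟨F, hFK, hF⟩ := K.exists_le_finrank_eq hjK
  have hF₀ : F ≠ ⊥ := Submodule.one_le_finrank_iff.mp (hF ▸ hj)
  exact (relEig_le_sSup_rayleighSet hW hj hF).trans
    (sSup_rayleighSet_le hF₀ fun u hu => h u (hFK hu))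

theorem rayleigh_le_relEig_finrank (hW : W.PosDef) {u : Fin n → ℂ} (hu : u ≠ 0) :
    rayleigh A W u ≤ relEig A W n := by
  refine le_csInf ⟨_, ⊤, by simp, rfl⟩ ?_
  rintro _ ⟨F, hF, rfl⟩
  rw [Submodule.eq_top_of_finrank_eq (S := F) (by simpa using hF)]
  exact rayleigh_le_sSup_rayleighSet hW Submodule.mem_top hu

end PosDef

/-- Interlacing: if `B` is dominated by `a • A` in the Rayleigh sense on a subspace of
codimension `d`, then `γ_j(B; W') ≤ a γ_k(A; W)` for every `k ≥ j + d`. -/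
theorem relEig_le_smul_relEig_of_rayleigh_le {A B W W' : Matrix (Fin n) (Fin n) ℂ}
    (hW : W.PosDef) (hW' : W'.PosDef) {a : ℝ} (ha : 0 ≤ a) {K : Submodule ℂ (Fin n → ℂ)}
    (hK : ∀ u ∈ K, u ≠ 0 → rayleigh B W' u ≤ a * rayleigh A W u) {j k : ℕ} (hj : 0 < j)
    (hk : k ≤ n) (hjk : n + j ≤ Module.finrank ℂ K + k) :
    relEig B W' j ≤ a * relEig A W k := by
  rw [relEig_eq_sInf A, ← smul_eq_mul, ← Real.sInf_smul_of_nonneg ha]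
  obtain ⟨F₀, -, hF₀⟩ := (⊤ : Submodule ℂ (Fin n → ℂ)).exists_le_finrank_eq (j := k) (by simpa)
  refine le_csInf ⟨_, Set.smul_mem_smul_set ⟨F₀, hF₀, rfl⟩⟩ ?_
  rintro _ ⟨_, ⟨F, hF, rfl⟩, rfl⟩
  have hdim : j ≤ Module.finrank ℂ ↥(F ⊓ K) := by
    have := Submodule.finrank_sup_add_finrank_inf_eq F K
    have : Module.finrank ℂ ↥(F ⊔ K) ≤ n := by simpa using Submodule.finrank_le (F ⊔ K)
    omega
  refine relEig_le_of_forall_rayleigh_le hW' hj hdim fun u hu hu0 => ?_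
  exact (hK u hu.2 hu0).trans
    (mul_le_mul_of_nonneg_left (rayleigh_le_sSup_rayleighSet hW hu.1 hu0) ha)

theorem finrank_ker_dotProductBilin_add_one_ge (w : Fin n → ℂ) :
    n ≤ Module.finrank ℂ (LinearMap.ker (dotProductBilin ℂ ℂ w)) + 1 := by
  have hrank := LinearMap.finrank_range_add_finrank_ker (dotProductBilin ℂ ℂ w)
  have hrange : Module.finrank ℂ (LinearMap.range (dotProductBilin ℂ ℂ w)) ≤ 1 :=
    (Submodule.finrank_le _).trans (Module.finrank_self ℂ).le
  simp only [Module.finrank_fin_fun] at hrank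
  omega

section RankOnePerturbation

variable {A W : Matrix (Fin n) (Fin n) ℂ} {v : Fin n → ℂ}

theorem rayleigh_add_smul_vecMulVec_of_dotProduct_eq_zero (a b c : ℝ) {u : Fin n → ℂ}
    (hu : star v ⬝ᵥ u = 0) :
    rayleigh (a • A + b • vecMulVec v (star v)) (W + c • vecMulVec v (star v)) u =
      a * rayleigh A W u := by
  simp only [rayleigh_def, reQuad_add, reQuad_smul, reQuad_vecMulVec_star, hu, map_zero,
    mul_zero, add_zero, mul_div_assoc]

theorem rayleigh_add_smul_vecMulVec_le (hW : W.PosDef) {c c' ε : ℝ} (hc : 0 ≤ c) (hε : 0 ≤ ε)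
    {W₀ : Matrix (Fin n) (Fin n) ℂ} (hW₀ : W₀ = W + c • vecMulVec v (star v))
    (hA : ∀ u, u ≠ 0 → rayleigh A W u ≤ 1)
    (hcc' : (c • W₀ - c' • vecMulVec v (star v)).PosSemidef) {u : Fin n → ℂ} (hu : u ≠ 0) :
    rayleigh ((ε * c) • A + (ε * c') • vecMulVec v (star v)) W₀ u ≤ 2 * (ε * c) := by
  have hWu := hW.reQuad_pos hu
  have hAW : reQuad A u ≤ reQuad W u := by
    simpa [rayleigh_def, div_le_one hWu] using hA u hu
  have hWW₀ : reQuad W u ≤ reQuad W₀ u := by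
    rw [hW₀, reQuad_add, reQuad_smul, reQuad_vecMulVec_star]
    linarith [mul_nonneg hc (Complex.normSq_nonneg (star v ⬝ᵥ u))]
  have hc'W₀ : c' * Complex.normSq (star v ⬝ᵥ u) ≤ c * reQuad W₀ u := by
    have := hcc'.reQuad_nonneg u
    rw [reQuad_sub, reQuad_smul, reQuad_smul, reQuad_vecMulVec_star] at this
    linarith
  have hεc : 0 ≤ ε * c := mul_nonneg hε hc
  rw [rayleigh_def, div_le_iff₀ (hWu.trans_le hWW₀), reQuad_add, reQuad_smul, reQuad_smul,
    reQuad_vecMulVec_star]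
  linarith [mul_le_mul_of_nonneg_left (hAW.trans hWW₀) hεc,
    mul_le_mul_of_nonneg_left hc'W₀ hε]

end RankOnePerturbation

theorem sum_Icc_two_le {f : ℕ → ℝ} {m : ℕ} {x y z : ℝ} (h2 : f 2 ≤ x)
    (hmid : ∀ j ∈ Finset.Icc 3 (m + 2), f j ≤ y) (htop : f (m + 3) ≤ z) :
    ∑ j ∈ Finset.Icc 2 (m + 3), f j ≤ x + m * y + z := by
  rw [Finset.sum_Icc_succ_top (by omega), ← Finset.add_sum_Ioc_eq_sum_Icc (by omega),
    ← Finset.Icc_add_one_left_eq_Ioc]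
  simp only [Nat.reduceAdd, add_assoc]
  have hsum := Finset.sum_le_card_nsmul _ _ _ hmid
  simp only [Nat.card_Icc, nsmul_eq_mul, show m + 2 + 1 - 3 = m by omega] at hsum
  linarith

theorem sum_of_upper_relative_eigenvalues_le_general {n : ℕ} (hn : 3 ≤ n)
    (W : Matrix (Fin n) (Fin n) ℂ) (hW : W.PosDef)
    (v : Fin n → ℂ) (c : ℝ) (hc : 0 < c)
    (W₀ : Matrix (Fin n) (Fin n) ℂ) (hW₀ : W₀ = W + c • vecMulVec v (star v))
    (A : Matrix (Fin n) (Fin n) ℂ)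
    (h3 : relEig A W 3 ≤ -2 * (n : ℝ) + 3) (hN : relEig A W n ≤ 1)
    (ε : ℝ) (hε : 0 ≤ ε) (c' : ℝ)
    (hcc' : (c • W₀ - c' • vecMulVec v (star v)).PosSemidef) :
    ∑ j ∈ Finset.Icc 2 n,
        relEig ((ε * c) • A + (ε * c') • vecMulVec v (star v)) W₀ j ≤ -(ε * c) := by
  have hεc : 0 ≤ ε * c := mul_nonneg hε hc.le
  have hW₀pd : W₀.PosDef :=
    hW₀ ▸ hW.add_posSemidef ((posSemidef_vecMulVec_self_star v).smul hc.le)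
  set K := LinearMap.ker (dotProductBilin ℂ ℂ (star v))
  have hK : n ≤ Module.finrank ℂ K + 1 := finrank_ker_dotProductBilin_add_one_ge (star v)
  have hBK (u : Fin n → ℂ) (hu : u ∈ K) :
      rayleigh ((ε * c) • A + (ε * c') • vecMulVec v (star v)) W₀ u = ε * c * rayleigh A W u :=
    hW₀ ▸ rayleigh_add_smul_vecMulVec_of_dotProduct_eq_zero _ _ _ (LinearMap.mem_ker.mp hu)
  have hA1 (u : Fin n → ℂ) (hu : u ≠ 0) : rayleigh A W u ≤ 1 :=
    (rayleigh_le_relEig_finrank hW hu).trans hN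
  obtain ⟨m, rfl⟩ : ∃ m, n = m + 3 := ⟨n - 3, by omega⟩
  refine (sum_Icc_two_le (x := ε * c * (-2 * ((m + 3 : ℕ) : ℝ) + 3)) (y := ε * c)
    (z := 2 * (ε * c)) ?_ ?_ ?_).trans (by push_cast; linarith [mul_nonneg hεc m.cast_nonneg])
  · exact (relEig_le_smul_relEig_of_rayleigh_le hW hW₀pd hεc (fun u hu _ => (hBK u hu).le)
      two_pos (by omega) (by omega)).trans (mul_le_mul_of_nonneg_left h3 hεc)
  · intro j hj
    obtain ⟨hj3, hjm⟩ := Finset.mem_Icc.mp hj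
    refine relEig_le_of_forall_rayleigh_le hW₀pd (K := K) (by omega) (by omega)
      fun u hu hu0 => (hBK u hu).trans_le (mul_le_of_le_one_right hεc (hA1 u hu0))
  · exact relEig_le_of_forall_rayleigh_le hW₀pd (K := ⊤) (by omega) (by simp) fun u _ hu0 =>
      rayleigh_add_smul_vecMulVec_le hW hc.le hε hW₀ hA1 hcc' hu0

/-- The pointwise linear-algebra content of relation (2.8) of the paper: the sum of all
eigenvalues of `εc·A + εc'·vv*` relative to `W₀ = W + c·vv*`, except the smallest,
is at most `-εc`. -/
theorem sum_of_upper_relative_eigenvalues_le {n : ℕ} (hn : 3 ≤ n)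
    (W : Matrix (Fin n) (Fin n) ℂ) (hW : W.PosDef)
    (v : Fin n → ℂ) (c : ℝ) (hc : 0 < c)
    (W₀ : Matrix (Fin n) (Fin n) ℂ) (hW₀ : W₀ = W + c • vecMulVec v (star v))
    (A : Matrix (Fin n) (Fin n) ℂ) (hA : A.IsHermitian)
    (h3 : relEig A W 3 ≤ -2 * (n : ℝ) + 3) (hN : relEig A W n ≤ 1)
    (ε : ℝ) (hε : 0 ≤ ε) (c' : ℝ) (hc' : 0 ≤ c')
    (hcc' : (c • W₀ - c' • vecMulVec v (star v)).PosSemidef) :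
    ∑ j ∈ Finset.Icc 2 n,
        relEig ((ε * c) • A + (ε * c') • vecMulVec v (star v)) W₀ j ≤ -(ε * c) :=
  sum_of_upper_relative_eigenvalues_le_general hn W hW v c hc W₀ hW₀ A h3 hN ε hε c' hcc'
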